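/- If there exists a derivation sequence w = α_{i_1} x_1, x_1 β_{i_1} = α_{i_2} x_2, ..., x_{k-1} β_{i_{k-1}} = α_{i_k} x_k, x_k β_{i_k} = u in a normal system, then the concatenation equation w x_1 β_{i_1} x_2 β_{i_2} ⋯ x_k β_{i_k} = α_{i_1} x_1 α_{i_2} x_2 ⋯ α_{i_k} x_k u holds. -/
import Mathlib


/-- The binary alphabet `A = {a, b}`. -/
inductive AB | a | b
deriving DecidableEq

/-- One derivation step of a normal system with rule set `P`:
`u → v` if there is a rule `α X ↦ X β` in `P` (represented as the pair
`(α, β)`) and a word `x` with `u = α x` and `v = x β`. -/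
def Step (P : List (List AB × List AB)) (u v : List AB) : Prop :=
  ∃ p ∈ P, ∃ x : List AB, u = p.1 ++ x ∧ v = x ++ p.2

theorem derivation_concat_equation (k : ℕ) (hk : 1 ≤ k)
    (α β x : ℕ → List AB) (w u : List AB)
    (h0 : w = α 0 ++ x 0)
    (hstep : ∀ j, j + 1 < k → x j ++ β j = α (j + 1) ++ x (j + 1))
    (hlast : x (k - 1) ++ β (k - 1) = u) :
    w ++ (List.range k).flatMap (fun j => x j ++ β j) =
      (List.range k).flatMap (fun j => α j ++ x j) ++ u := by
  induction k generalizing u with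
  | zero => omega
  | succ k ih =>
    rcases Nat.eq_zero_or_pos k with rfl | hk'
    · subst h0; simp only [← hlast]; simp [List.range_succ]
    · have hstep' : ∀ j, j + 1 < k → x j ++ β j = α (j + 1) ++ x (j + 1) :=
        fun j hj => hstep j (by omega)
      have hlast' : x (k - 1) ++ β (k - 1) = α k ++ x k := by
        have := hstep (k - 1) (by omega)
        rwa [Nat.sub_add_cancel hk'] at this
      have IH := ih hk' (α k ++ x k) hstep' hlast'
      simp only [List.range_succ, List.flatMap_append, List.flatMap_singleton]
      rw [← List.append_assoc, IH, ← hlast]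
      simp
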